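/- Let Λ be a row-finite, locally convex k-graph. Fix x ∈ Λ^{≤∞} and p, m, n ∈ ℕ^k with p ∧ d(x) = 0. Then the following are equivalent: (i) (x;(p+m, p+m+l)) ≈ (x;(p+n, p+n+l)) for all l ∈ ℕ^k (equivalently, σ^m(y) = σ^n(y) for the infinite path y = [x;(p,∞)] of the desourcification of Λ); (ii) σ^{m∧d(x)}(x) = σ^{n∧d(x)}(x) and m − m∧d(x) = n − n∧d(x). -/

import Mathlib

open scoped ENat

/-- `q ≤ m` coordinatewise, where `q ∈ ℕ^k` and `m ∈ (ℕ ∪ {∞})^k`. -/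
def leDeg (k : ℕ) (q : Fin k → ℕ) (m : Fin k → ℕ∞) : Prop :=
  ∀ i, (q i : ℕ∞) ≤ m i

/-- The coordinatewise minimum `m ∧ d` of `m ∈ ℕ^k` and `d ∈ (ℕ ∪ {∞})^k`,
viewed as an element of `ℕ^k`. -/
noncomputable def wedge {k : ℕ} (m : Fin k → ℕ) (dx : Fin k → ℕ∞) : Fin k → ℕ :=
  fun i => ((m i : ℕ∞) ⊓ dx i).toNat

lemma wedge_coe {k : ℕ} (m : Fin k → ℕ) (dx : Fin k → ℕ∞) (i : Fin k) :
    ((wedge m dx i : ℕ)  : ℕ∞) = (m i : ℕ∞) ⊓ dx i := by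
  have h : (m i : ℕ∞) ⊓ dx i ≠ ⊤ :=
    (inf_le_left.trans_lt (ENat.coe_lt_top (m i))).ne
  simpa [wedge] using ENat.coe_toNat h

lemma wedge_leDeg {k : ℕ} (m : Fin k → ℕ) (dx : Fin k → ℕ∞) :
    leDeg k (wedge m dx) dx := by
  intro i
  rw [wedge_coe]
  exact inf_le_right

/-- The data of a countable-free small category with a degree map: the underlying data
of a `k`-graph. -/
structure KGraphData (k : ℕ) where
  Obj : Type
  Mor : Type
  r : Mor → Obj
  s : Mor → Obj
  idm : Obj → Mor
  comp : Mor → Mor → Mor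
  d : Mor → Fin k → ℕ

/-- The axioms making `Λ` a `k`-graph: a small category together with a degree functor
`d : Λ → ℕ^k` satisfying the factorisation property. (Composition `comp f g` is only
constrained when `s f = r g`.) -/
structure IsKGraph {k : ℕ} (Λ : KGraphData k) : Prop where
  r_id : ∀ v, Λ.r (Λ.idm v) = v
  s_id : ∀ v, Λ.s (Λ.idm v) = v
  id_comp : ∀ f, Λ.comp (Λ.idm (Λ.r f)) f = f
  comp_id : ∀ f, Λ.comp f (Λ.idm (Λ.s f)) = f
  r_comp : ∀ f g, Λ.s f = Λ.r g → Λ.r (Λ.comp f g) = Λ.r f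
  s_comp : ∀ f g, Λ.s f = Λ.r g → Λ.s (Λ.comp f g) = Λ.s g
  assoc : ∀ f g h, Λ.s f = Λ.r g → Λ.s g = Λ.r h →
    Λ.comp (Λ.comp f g) h = Λ.comp f (Λ.comp g h)
  d_id : ∀ v, Λ.d (Λ.idm v) = 0
  d_comp : ∀ f g, Λ.s f = Λ.r g → Λ.d (Λ.comp f g) = Λ.d f + Λ.d g
  factor : ∀ (f : Λ.Mor) (m n : Fin k → ℕ), Λ.d f = m + n →
    ∃! p : Λ.Mor × Λ.Mor, Λ.s p.1 = Λ.r p.2 ∧ Λ.d p.1 = m ∧ Λ.d p.2 = n ∧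
      Λ.comp p.1 p.2 = f

/-- `Λ` is row-finite: `vΛ^n` is finite for every vertex `v` and degree `n`. -/
def RowFinite {k : ℕ} (Λ : KGraphData k) : Prop :=
  ∀ (v : Λ.Obj) (n : Fin k → ℕ), {f : Λ.Mor | Λ.r f = v ∧ Λ.d f = n}.Finite

/-- `Λ` is locally convex. -/
def LocallyConvex {k : ℕ} (Λ : KGraphData k) : Prop :=
  ∀ (i j : Fin k), i ≠ j → ∀ lam mu : Λ.Mor,
    Λ.d lam = Pi.single i 1 → Λ.d mu = Pi.single j 1 → Λ.r lam = Λ.r mu →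
    (∃ f, Λ.r f = Λ.s lam ∧ Λ.d f = Pi.single j 1) ∧
    (∃ g, Λ.r g = Λ.s mu ∧ Λ.d g = Pi.single i 1)

/-- A boundary path of `Λ`: a degree-preserving functor `x : Ω_{k,m} → Λ`
(encoded by its vertex map `vert` and segment map `seg`, constrained on
pairs `p ≤ q ≤ m = deg`) such that whenever `p ≤ m` and `p i = m i`,
`x(p)Λ^{e_i} = ∅`. -/
structure BPath (k : ℕ) (Λ : KGraphData k) where
  deg : Fin k → ℕ∞
  vert : (Fin k → ℕ) → Λ.Obj
  seg : (Fin k → ℕ) → (Fin k → ℕ) → Λ.Mor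
  seg_r : ∀ p q, p ≤ q → leDeg k q deg → Λ.r (seg p q) = vert p
  seg_s : ∀ p q, p ≤ q → leDeg k q deg → Λ.s (seg p q) = vert q
  seg_deg : ∀ p q, p ≤ q → leDeg k q deg → Λ.d (seg p q) = q - p
  seg_id : ∀ p, leDeg k p deg → seg p p = Λ.idm (vert p)
  seg_comp : ∀ p q t, p ≤ q → q ≤ t → leDeg k t deg →
    Λ.comp (seg p q) (seg q t) = seg p t
  boundary : ∀ (p : Fin k → ℕ) (i : Fin k), leDeg k p deg → (p i : ℕ∞) = deg i →
    ∀ e : Λ.Mor, Λ.r e = vert p → Λ.d e ≠ Pi.single i 1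

/-- Equality of boundary paths as functors: same degree and the same segments on
the common (valid) domain. -/
def BPath.eqv {k : ℕ} {Λ : KGraphData k} (x y : BPath k Λ) : Prop :=
  x.deg = y.deg ∧ ∀ p q, p ≤ q → leDeg k q x.deg → x.seg p q = y.seg p q

lemma leDeg_add {k : ℕ} {n q : Fin k → ℕ} {D : Fin k → ℕ∞}
    (hn : leDeg k n D) (hq : leDeg k q (fun i => D i - (n i : ℕ∞))) :
    leDeg k (q + n) D := by
  intro i
  have hqi := hq i
  have hni := hn i
  by_cases hD : D i = ⊤
  · rw [hD]; exact le_top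
  · lift D i to ℕ using hD with a ha
    rw [show ((a : ℕ∞) - (n i : ℕ∞)) = ((a - n i : ℕ) : ℕ∞) by
      exact_mod_cast (ENat.coe_sub a (n i)).symm] at hqi
    have h1 : q i ≤ a - n i := by exact_mod_cast hqi
    have h2 : n i ≤ a := by exact_mod_cast hni
    have h3 : q i + n i ≤ a := by omega
    show ((q i + n i : ℕ) : ℕ∞) ≤ (a : ℕ∞)
    exact_mod_cast h3

/-- The shift `σ^n(x)` of a boundary path `x` by `n ≤ d(x)`. -/
def BPath.shift {k : ℕ} {Λ : KGraphData k} (x : BPath k Λ) (n : Fin k → ℕ)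
    (h : leDeg k n x.deg) : BPath k Λ where
  deg := fun i => x.deg i - (n i : ℕ∞)
  vert := fun p => x.vert (p + n)
  seg := fun p q => x.seg (p + n) (q + n)
  seg_r := fun p q hpq hq =>
    x.seg_r (p + n) (q + n) (add_le_add_left hpq n) (leDeg_add h hq)
  seg_s := fun p q hpq hq =>
    x.seg_s (p + n) (q + n) (add_le_add_left hpq n) (leDeg_add h hq)
  seg_deg := by
    intro p q hpq hq
    rw [x.seg_deg (p + n) (q + n) (add_le_add_left hpq n) (leDeg_add h hq)]
    funext i
    simp only [Pi.sub_apply, Pi.add_apply]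
    omega
  seg_id := by
    intro p hp
    show x.seg (p + n) (p + n) = _
    rw [x.seg_id (p + n) (leDeg_add h hp)]
  seg_comp := fun p q t hpq hqt ht =>
    x.seg_comp (p + n) (q + n) (t + n) (add_le_add_left hpq n)
      (add_le_add_left hqt n) (leDeg_add h ht)
  boundary := by
    intro p i hp hpi e he
    refine x.boundary (p + n) i (leDeg_add h hp) ?_ e he
    have hni := h i
    have hpi' : (p i : ℕ∞) = x.deg i - (n i : ℕ∞) := hpi
    clear hpi
    by_cases hD : x.deg i = ⊤
    · rw [hD] at hpi'
      simp at hpi'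
    · lift x.deg i to ℕ using hD with a ha
      rw [show ((a : ℕ∞) - (n i : ℕ∞)) = ((a - n i : ℕ) : ℕ∞) by
        exact_mod_cast (ENat.coe_sub a (n i)).symm] at hpi'
      have h1 : p i = a - n i := by exact_mod_cast hpi'
      have h2 : n i ≤ a := by exact_mod_cast hni
      have h3 : p i + n i = a := by omega
      show ((p i + n i : ℕ) : ℕ∞) = (a : ℕ∞)
      exact_mod_cast h3

/-- The relation `∼` on `V_Λ = Λ^{≤∞} × ℕ^k`. -/
def VRel {k : ℕ} {Λ : KGraphData k} (a b : BPath k Λ × (Fin k → ℕ)) : Prop :=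
  a.1.vert (wedge a.2 a.1.deg) = b.1.vert (wedge b.2 b.1.deg) ∧
  a.2 - wedge a.2 a.1.deg = b.2 - wedge b.2 b.1.deg

/-- The relation `≈` on `P_Λ = {(x;(m,n)) : x ∈ Λ^{≤∞}, m ≤ n}`
(as a relation on all triples). -/
def PRel {k : ℕ} {Λ : KGraphData k}
    (a b : BPath k Λ × (Fin k → ℕ) × (Fin k → ℕ)) : Prop :=
  a.1.seg (wedge a.2.1 a.1.deg) (wedge a.2.2 a.1.deg) =
    b.1.seg (wedge b.2.1 b.1.deg) (wedge b.2.2 b.1.deg) ∧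
  a.2.1 - wedge a.2.1 a.1.deg = b.2.1 - wedge b.2.1 b.1.deg ∧
  a.2.2 - a.2.1 = b.2.2 - b.2.1

/-- `z` is the concatenation `λ x` of the morphism `lam` with the boundary path `x`:
`z` has degree `d(lam) + d(x)`, `z(0, d lam) = lam`, and
`z(d lam, d lam + p) = x(0, p)` for all `p ≤ d(x)`. -/
def IsConcat {k : ℕ} (Λ : KGraphData k) (lam : Λ.Mor) (x z : BPath k Λ) : Prop :=
  z.deg = (fun i => (Λ.d lam i : ℕ∞) + x.deg i) ∧
  z.seg 0 (Λ.d lam) = lam ∧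
  ∀ p, leDeg k p x.deg → z.seg (Λ.d lam) (Λ.d lam + p) = x.seg 0 p

/-- `Λ` has local periodicity `m, n` at the vertex `v`: for every boundary path
`x ∈ vΛ^{≤∞}`, `m − m∧d(x) = n − n∧d(x)` and `σ^{m∧d(x)}(x) = σ^{n∧d(x)}(x)`. -/
def LocalPeriodicity {k : ℕ} (Λ : KGraphData k) (m n : Fin k → ℕ) (v : Λ.Obj) : Prop :=
  ∀ x : BPath k Λ, x.vert 0 = v →
    (m - wedge m x.deg = n - wedge n x.deg) ∧
    BPath.eqv (x.shift (wedge m x.deg) (wedge_leDeg m x.deg))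
      (x.shift (wedge n x.deg) (wedge_leDeg n x.deg))

/-! Since `p ∧ d(x) = 0`, the wedge `(p + m + l) ∧ d(x)` equals `m ∧ d(x) + l ∧ d(y)` with
`y = σ^{m ∧ d(x)}(x)`, so condition (i) says exactly that `m − m ∧ d(x) = n − n ∧ d(x)` and
that the shifted paths `σ^{m ∧ d(x)}(x)` and `σ^{n ∧ d(x)}(x)` have the same initial segments
`y(0, l ∧ d(y))` for every `l`. Initial segments of all degrees determine a boundary path: taking
`l` large recovers its degree, and uniqueness of factorisations recovers every segment
`y(a, b)` from `y(0, b)`. -/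

lemma ENat.natCast_min (a b : ℕ) : ((min a b : ℕ) : ℕ∞) = min (a : ℕ∞) b :=
  Nat.mono_cast.map_min

lemma ENat.natCast_add_inf (a b : ℕ) (d : ℕ∞) :
    ((a + b : ℕ) : ℕ∞) ⊓ d =
      ((a : ℕ∞) ⊓ d) + ((b : ℕ∞) ⊓ (d - ((a : ℕ∞) ⊓ d))) := by
  induction d using ENat.recTopCoe with
  | top => simp
  | coe d =>
    simp only [← ENat.natCast_min, ← ENat.natCast_sub, ← Nat.cast_add, Nat.cast_inj]
    omega

lemma ENat.eq_of_forall_natCast_inf_eq {d e : ℕ∞}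
    (h : ∀ N : ℕ, (N : ℕ∞) ⊓ d = (N : ℕ∞) ⊓ e) : d = e := by
  induction d using ENat.recTopCoe with
  | top =>
    induction e using ENat.recTopCoe with
    | top => rfl
    | coe b => simpa using h (b + 1)
  | coe a =>
    induction e using ENat.recTopCoe with
    | top => simpa using (h (a + 1)).symm
    | coe b =>
      have := h (a + b)
      simp only [← ENat.natCast_min, Nat.cast_inj] at this ⊢
      omega

section

variable {k : ℕ}

lemma leDeg.of_le {p q : Fin k → ℕ} {D : Fin k → ℕ∞} (hpq : p ≤ q) (hq : leDeg k q D) :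
    leDeg k p D :=
  fun i => (Nat.cast_le.2 (hpq i)).trans (hq i)

lemma wedge_le (m : Fin k → ℕ) (D : Fin k → ℕ∞) : wedge m D ≤ m :=
  fun i => Nat.cast_le.1 (wedge_coe m D i ▸ inf_le_left)

lemma wedge_eq_self {q : Fin k → ℕ} {D : Fin k → ℕ∞} (hq : leDeg k q D) : wedge q D = q :=
  funext fun i => Nat.cast_injective (R := ℕ∞) <| (wedge_coe q D i).trans (inf_eq_left.2 (hq i))

lemma wedge_add (m l : Fin k → ℕ) (D : Fin k → ℕ∞) :
    wedge (m + l) D = wedge m D + wedge l (fun i => D i - (wedge m D i : ℕ∞)) := by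
  funext i
  apply Nat.cast_injective (R := ℕ∞)
  simp only [Pi.add_apply, Nat.cast_add, wedge_coe]
  exact ENat.natCast_add_inf (m i) (l i) (D i)

lemma wedge_add_of_wedge_eq_zero {p : Fin k → ℕ} {D : Fin k → ℕ∞} (hp : wedge p D = 0)
    (q : Fin k → ℕ) : wedge (p + q) D = wedge q D := by
  simp [wedge_add, hp]

lemma eq_of_forall_wedge_eq {D E : Fin k → ℕ∞} (h : ∀ l, wedge l D = wedge l E) : D = E :=
  funext fun i => ENat.eq_of_forall_natCast_inf_eq fun N => by
    simpa only [wedge_coe] using congrArg (fun w => (w i : ℕ∞)) (h fun _ => N)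

variable {Λ : KGraphData k}

lemma IsKGraph.factor_unique (hΛ : IsKGraph Λ) {f g f' g' : Λ.Mor} (hfg : Λ.s f = Λ.r g)
    (hfg' : Λ.s f' = Λ.r g') (hf : Λ.d f = Λ.d f') (hg : Λ.d g = Λ.d g')
    (h : Λ.comp f g = Λ.comp f' g') : f = f' ∧ g = g' :=
  Prod.ext_iff.1 <| (hΛ.factor _ _ _ (hΛ.d_comp f g hfg)).unique (y₁ := (f, g))
    (y₂ := (f', g')) ⟨hfg, rfl, rfl, rfl⟩ ⟨hfg', hf.symm, hg.symm, h.symm⟩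

lemma BPath.seg_eq_of_seg_zero_eq (hΛ : IsKGraph Λ) {y z : BPath k Λ} {p q : Fin k → ℕ}
    (hpq : p ≤ q) (hy : leDeg k q y.deg) (hz : leDeg k q z.deg) (h : y.seg 0 q = z.seg 0 q) :
    y.seg p q = z.seg p q := by
  have hp0 : 0 ≤ p := zero_le
  refine (hΛ.factor_unique (f := y.seg 0 p) (f' := z.seg 0 p) ?_ ?_ ?_ ?_ ?_).2
  · rw [y.seg_s 0 p hp0 (hy.of_le hpq), y.seg_r p q hpq hy]
  · rw [z.seg_s 0 p hp0 (hz.of_le hpq), z.seg_r p q hpq hz]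
  · rw [y.seg_deg 0 p hp0 (hy.of_le hpq), z.seg_deg 0 p hp0 (hz.of_le hpq)]
  · rw [y.seg_deg p q hpq hy, z.seg_deg p q hpq hz]
  · rw [y.seg_comp 0 p q hp0 hpq hy, z.seg_comp 0 p q hp0 hpq hz, h]

noncomputable def BPath.initSeg (y : BPath k Λ) (l : Fin k → ℕ) : Λ.Mor :=
  y.seg 0 (wedge l y.deg)

lemma BPath.forall_initSeg_eq_iff_eqv (hΛ : IsKGraph Λ) (y z : BPath k Λ) :
    (∀ l, y.initSeg l = z.initSeg l) ↔ y.eqv z := by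
  constructor
  · intro h
    have hdeg : y.deg = z.deg := eq_of_forall_wedge_eq fun l => by
      simpa [BPath.initSeg, y.seg_deg 0 _ zero_le (wedge_leDeg _ _),
        z.seg_deg 0 _ zero_le (wedge_leDeg _ _)] using congrArg Λ.d (h l)
    refine ⟨hdeg, fun p q hpq hq => y.seg_eq_of_seg_zero_eq hΛ hpq hq (hdeg ▸ hq) ?_⟩
    simpa only [BPath.initSeg, wedge_eq_self hq, wedge_eq_self (hdeg ▸ hq)] using h q
  · rintro ⟨hdeg, hseg⟩ l
    rw [BPath.initSeg, BPath.initSeg, ← hdeg]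
    exact hseg 0 _ zero_le (wedge_leDeg _ _)

lemma prel_iff_initSeg_shift_eq (x : BPath k Λ) {p : Fin k → ℕ} (hp : wedge p x.deg = 0)
    (m n l : Fin k → ℕ) :
    PRel (x, p + m, p + m + l) (x, p + n, p + n + l) ↔
      (x.shift (wedge m x.deg) (wedge_leDeg m x.deg)).initSeg l =
          (x.shift (wedge n x.deg) (wedge_leDeg n x.deg)).initSeg l ∧
        m - wedge m x.deg = n - wedge n x.deg := by
  have hseg : ∀ r, x.seg (wedge (p + r) x.deg) (wedge (p + r + l) x.deg) =
      (x.shift (wedge r x.deg) (wedge_leDeg r x.deg)).initSeg l := by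
    intro r
    rw [add_assoc, wedge_add_of_wedge_eq_zero hp, wedge_add_of_wedge_eq_zero hp, wedge_add,
      add_comm]
    simp only [BPath.initSeg, BPath.shift, zero_add]
  have hsub : ∀ r, (p + r) - wedge (p + r) x.deg = p + (r - wedge r x.deg) := fun r => by
    rw [wedge_add_of_wedge_eq_zero hp, add_tsub_assoc_of_le (wedge_le r _)]
  simp only [PRel, hseg, hsub, add_right_inj, add_tsub_cancel_left, and_true]

end

theorem periodic_projection_general (k : ℕ) (Λ : KGraphData k) (hΛ : IsKGraph Λ)
    (x : BPath k Λ) (p m n : Fin k → ℕ) (hp : wedge p x.deg = 0) :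
    (∀ l : Fin k → ℕ, PRel (x, p + m, p + m + l) (x, p + n, p + n + l)) ↔
      (BPath.eqv (x.shift (wedge m x.deg) (wedge_leDeg m x.deg))
          (x.shift (wedge n x.deg) (wedge_leDeg n x.deg)) ∧
        m - wedge m x.deg = n - wedge n x.deg) := by
  simp only [prel_iff_initSeg_shift_eq x hp, forall_and, forall_const,
    BPath.forall_initSeg_eq_iff_eqv hΛ]

/-- For `x ∈ Λ^{≤∞}` and `p, m, n ∈ ℕ^k` with `p ∧ d(x) = 0`:
`σ^m(y) = σ^n(y)` for `y = [x;(p,∞)]` (i.e. `(x;(p+m,p+m+l)) ≈ (x;(p+n,p+n+l))`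
for all `l`) if and only if `σ^{m∧d(x)}(x) = σ^{n∧d(x)}(x)` and
`m − m∧d(x) = n − n∧d(x)`. -/
theorem periodic_projection (k : ℕ) (hk : 1 ≤ k) (Λ : KGraphData k)
    (hΛ : IsKGraph Λ) (hrf : RowFinite Λ) (hlc : LocallyConvex Λ)
    (x : BPath k Λ) (p m n : Fin k → ℕ) (hp : wedge p x.deg = 0) :
    (∀ l : Fin k → ℕ, PRel (x, p + m, p + m + l) (x, p + n, p + n + l)) ↔
      (BPath.eqv (x.shift (wedge m x.deg) (wedge_leDeg m x.deg))
          (x.shift (wedge n x.deg) (wedge_leDeg n x.deg)) ∧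
        m - wedge m x.deg = n - wedge n x.deg) :=
  periodic_projection_general k Λ hΛ x p m n hp
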